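/- arXiv:2011.12106 — 6 statements merged into one kernel-verified Lean document; each statement's English description precedes it below -/
import Mathlib

section
/- Consider the rectangular (p+1)×(q+1) Young tableau labelled increasingly left-to-right then top-to-bottom, and let R (resp. C) denote the subgroup of Σ_{(p+1)(q+1)} of permutations fixing each row (resp. each column) setwise. If σ ∈ Σ_{(p+1)(q+1)} fixes the boxes 1 and (p+1)(q+1), permutes each of the 'anti-diagonal label classes' of the tableau among themselves, and there exists τ ∈ C with τσ ∈ R, then σ = id. -/
/-!
Rows are handled from top to bottom. Once the rows above row `r` are fixed pointwise, `σ`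
cannot send a box of row `r` higher up, so by the anti-diagonal condition it can only move it
weakly to the left. Since `τ * σ` preserves rows and `τ` preserves columns, `σ` induces an
injection on the column indices of row `r`; an injective self-map moving nothing to the right
is the identity.
-/

open Function Equiv

theorem Function.Injective.apply_eq_self_of_apply_le {α : Type*} [PartialOrder α]
    [WellFoundedLT α] {f : α → α} (hf : Injective f) (hle : ∀ a, f a ≤ a) (a : α) :
    f a = a := by
  induction a using WellFoundedLT.induction with
  | _ a ih =>
    by_contra hne
    exact hne (hf (ih (f a) (lt_of_le_of_ne (hle a) hne)))

theorem Function.Injective.mem_of_apply_mem {α : Type*} {f : α → α} (hf : Injective f)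
    {S : Set α} (hS : ∀ x ∈ S, f x = x) {x : α} (hx : f x ∈ S) : x ∈ S :=
  hf (hS _ hx) ▸ hx

theorem Equiv.Perm.snd_apply_injective_of_mul_preserves_fst {α β : Type*}
    {σ τ : Perm (α × β)} (hcol : ∀ x, (τ x).2 = x.2) (hrow : ∀ x, ((τ * σ) x).1 = x.1)
    (a : α) : Injective fun b => (σ (a, b)).2 := by
  intro b b' h
  have : (τ * σ) (a, b) = (τ * σ) (a, b') :=
    Prod.ext (by rw [hrow, hrow]) (by simpa only [Perm.mul_apply, hcol] using h)
  exact (Prod.ext_iff.mp ((τ * σ).injective this)).2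

theorem Equiv.Perm.apply_row_eq_self_of_fixes_lower_rows {m n : ℕ} {σ : Perm (Fin m × Fin n)}
    (hdiag : ∀ x : Fin m × Fin n, ((σ x).1 : ℕ) + ((σ x).2 : ℕ) = (x.1 : ℕ) + (x.2 : ℕ))
    (hrow : ∀ r, Injective fun c => (σ (r, c)).2) (r : Fin m)
    (hlower : ∀ x : Fin m × Fin n, x.1 < r → σ x = x) (c : Fin n) : σ (r, c) = (r, c) := by
  have hfst_ge : ∀ c, r ≤ (σ (r, c)).1 := fun c =>
    not_lt.mp fun h => lt_irrefl r (σ.injective.mem_of_apply_mem (S := {x | x.1 < r}) hlower h)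
  have hsnd_le : ∀ c, (σ (r, c)).2 ≤ c := fun c => by
    have := hdiag (r, c)
    have := Fin.le_def.mp (hfst_ge c)
    exact Fin.le_def.mpr (by simp only at *; omega)
  have hsnd : (σ (r, c)).2 = c := (hrow r).apply_eq_self_of_apply_le hsnd_le c
  have hfst : (σ (r, c)).1 = r := by
    have := hdiag (r, c)
    have := congrArg Fin.val hsnd
    exact Fin.ext (by simp only at *; omega)
  exact Prod.ext hfst hsnd

theorem young_tableau_rigidity_general (p q : ℕ)
    (σ : Equiv.Perm (Fin (p + 1) × Fin (q + 1)))
    (hdiag : ∀ x : Fin (p + 1) × Fin (q + 1),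
      ((σ x).1 : ℕ) + ((σ x).2 : ℕ) = (x.1 : ℕ) + (x.2 : ℕ))
    (hτ : ∃ τ : Equiv.Perm (Fin (p + 1) × Fin (q + 1)),
      (∀ x, (τ x).2 = x.2) ∧ ∀ x, ((τ * σ) x).1 = x.1) :
    σ = 1 := by
  obtain ⟨τ, hcol, hrow⟩ := hτ
  have hrows : ∀ r c, σ (r, c) = (r, c) := by
    intro r
    induction r using WellFoundedLT.induction with
    | _ r ih =>
      exact Perm.apply_row_eq_self_of_fixes_lower_rows hdiag
        (Perm.snd_apply_injective_of_mul_preserves_fst hcol hrow) r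
        (fun x hx => ih x.1 hx x.2)
  exact Equiv.ext fun x => hrows x.1 x.2

/-- Combinatorial core of Coulembier's Proposition `non-zero_detection`.
Boxes of the rectangular `(p+1) × (q+1)` Young tableau are indexed by pairs
`(r, c) : Fin (p+1) × Fin (q+1)` (row `r`, column `c`); the anti-diagonal label classes
are the sets `{(r,c) : r + c = s}`.  If a permutation `σ` of the boxes fixes the first
box `(0,0)` and the last box `(p,q)`, permutes each anti-diagonal label class among
itself, and becomes a row permutation after composition with some column permutation
`τ`, then `σ = id`. -/
theorem young_tableau_rigidity (p q : ℕ)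
    (σ : Equiv.Perm (Fin (p + 1) × Fin (q + 1)))
    (h0 : σ (0, 0) = (0, 0))
    (hlast : σ (Fin.last p, Fin.last q) = (Fin.last p, Fin.last q))
    (hdiag : ∀ x : Fin (p + 1) × Fin (q + 1),
      ((σ x).1 : ℕ) + ((σ x).2 : ℕ) = (x.1 : ℕ) + (x.2 : ℕ))
    (hτ : ∃ τ : Equiv.Perm (Fin (p + 1) × Fin (q + 1)),
      (∀ x, (τ x).2 = x.2) ∧ ∀ x, ((τ * σ) x).1 = x.1) :
    σ = 1 :=
  young_tableau_rigidity_general p q σ hdiag hτ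
end

section
/- Let 𝒞 be a ℤ/2-graded symmetric monoidal additive category (Koszul signs) with finite direct sums, let Y be an object with a dual, let L₁,…,L_p be even invertible objects and L_{p+1},…,L_{p+q} odd invertible objects, and set X = L₁ ⊕ ⋯ ⊕ L_{p+q} ⊕ Y. If the Young symmetrizer S_X^{(q+1,p+1)} (symmetrize along rows, then antisymmetrize along columns, of the rectangular (p+1)×(q+1) tableau) is the zero endomorphism of X^{⊗(p+1)(q+1)}, then Y ≅ 0. -/
open CategoryTheory CategoryTheory.Limits CategoryTheory.MonoidalCategory

/-- The iterated tensor product `X 0 ⊗ X 1 ⊗ ⋯ ⊗ X (m-1)` of a finite family of objects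
in a monoidal category. -/
def tObj {C : Type*} [Category C] [MonoidalCategory C] :
    ∀ {m : ℕ}, (Fin m → C) → C
  | 0, _ => 𝟙_ C
  | m + 1, X => tObj (fun i => X i.castSucc) ⊗ X (Fin.last m)

/-- The iterated tensor product of a finite family of morphisms. -/
def tHom {C : Type*} [Category C] [MonoidalCategory C] :
    ∀ {m : ℕ} {X Y : Fin m → C}, (∀ i, X i ⟶ Y i) → (tObj X ⟶ tObj Y)
  | 0, _, _, _ => 𝟙 _
  | m + 1, _, _, f => tensorHom (tHom fun i => f i.castSucc) (f (Fin.last m))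

/-- The label of box `i` of the rectangular `(p+1) × (q+1)` tableau (listed row by row):
box `(r, c)` gets the anti-diagonal label `r + c ∈ Fin (p+q+1)`; the last label `p + q`
is attained exactly at the distinguished box `(p, q)`. -/
def lab (p q : ℕ) (i : Fin ((p + 1) * (q + 1))) : Fin (p + q + 1) :=
  ⟨(i : ℕ) / (q + 1) + (i : ℕ) % (q + 1), by
    have h1 : (i : ℕ) / (q + 1) < p + 1 :=
      (Nat.div_lt_iff_lt_mul (Nat.succ_pos q)).2 i.isLt
    have h2 : (i : ℕ) % (q + 1) < q + 1 := Nat.mod_lt _ (Nat.succ_pos q)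
    omega⟩

/-! On the summand `⨂ᵢ Z (lab p q i)` of `X^{⊗(p+1)(q+1)}`, where the box `(r, c)` of the
tableau carries the summand `Z (r + c)`, the Young symmetrizer acts as the identity: a row
permutation followed by a column permutation that preserves every anti-diagonal label is trivial.
So the vanishing of the symmetrizer kills this summand. It is a tensor product of invertible
objects and one copy of `Y`, sitting at the corner `(p, q)`, the only box labelled `p + q`;
tensoring with the inverses shows `Y ≅ 0`. -/

open Finset Equiv

namespace Equiv.Perm

variable {ι R : Type*} [Fintype ι] [CommRing R] [LinearOrder R] [IsStrictOrderedRing R]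
  {r c : ι → R} {σ τ : Perm ι}

/-- Comparing `∑ c r` with its value after `τ * σ` gives `∑ c ∘ σ * (c ∘ σ - c) = 0`,
and with `∑ (c ∘ σ)² = ∑ c²` this is `∑ (c ∘ σ - c)² = 0`. -/
lemma apply_eq_of_preserves_add (hσ : ∀ i, r (σ i) = r i) (hτ : ∀ i, c (τ i) = c i)
    (h : ∀ i, r (τ (σ i)) + c (τ (σ i)) = r i + c i) (i : ι) : c (σ i) = c i := by
  have hr : ∀ i, r (τ (σ i)) = r i + c i - c (σ i) := fun i => by
    linarith [h i, hτ (σ i)]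
  have hcross : ∑ i, c (σ i) * (c (σ i) - c i) = 0 := by
    have h₁ : ∑ i, c (σ i) * r i = ∑ i, c i * r i := by
      simpa only [hσ] using Equiv.sum_comp σ (fun j => c j * r j)
    have h₂ : ∑ i, c (σ i) * (r i + c i - c (σ i)) = ∑ i, c i * r i := by
      simpa only [Equiv.trans_apply, hτ, hr] using
        Equiv.sum_comp (σ.trans τ) (fun j => c j * r j)
    have h₃ : ∑ i, c (σ i) * (r i + c i - c (σ i)) =
        ∑ i, c (σ i) * r i - ∑ i, c (σ i) * (c (σ i) - c i) := by
      rw [← sum_sub_distrib]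
      exact sum_congr rfl fun _ _ => by ring
    linarith
  have hsq : ∑ i, c (σ i) ^ 2 = ∑ i, c i ^ 2 := Equiv.sum_comp σ (fun j => c j ^ 2)
  have hzero : ∑ i, (c (σ i) - c i) ^ 2 = 0 := by
    calc ∑ i, (c (σ i) - c i) ^ 2
        = 2 * ∑ i, c (σ i) * (c (σ i) - c i) - (∑ i, c (σ i) ^ 2 - ∑ i, c i ^ 2) := by
          rw [mul_sum, ← sum_sub_distrib, ← sum_sub_distrib]
          exact sum_congr rfl fun _ _ => by ring
      _ = 0 := by rw [hcross, hsq]; ring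
  have hterm := (Fintype.sum_eq_zero_iff_of_nonneg fun i => sq_nonneg (c (σ i) - c i)).1 hzero
  exact sub_eq_zero.1 (pow_eq_zero_iff two_ne_zero |>.1 (congrFun hterm i))

lemma eq_one_of_preserves_add (hrc : Function.Injective fun i => (r i, c i))
    (hσ : ∀ i, r (σ i) = r i) (hτ : ∀ i, c (τ i) = c i)
    (h : ∀ i, r (τ (σ i)) + c (τ (σ i)) = r i + c i) : σ = 1 ∧ τ = 1 := by
  have hσ₁ : σ = 1 :=
    ext fun i => hrc (Prod.ext (hσ i) (apply_eq_of_preserves_add hσ hτ h i))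
  subst hσ₁
  refine ⟨rfl, ext fun i => hrc (Prod.ext ?_ (hτ i))⟩
  have := h i
  simp only [one_apply, hτ] at this ⊢
  linarith

end Equiv.Perm

section Tableau

variable (p q : ℕ)

def rowStabilizer : Finset (Perm (Fin ((p + 1) * (q + 1)))) :=
  univ.filter fun σ => ∀ i, (σ i : ℕ) / (q + 1) = (i : ℕ) / (q + 1)

def columnStabilizer : Finset (Perm (Fin ((p + 1) * (q + 1)))) :=
  univ.filter fun τ => ∀ i, (τ i : ℕ) % (q + 1) = (i : ℕ) % (q + 1)

lemma one_mem_rowStabilizer : 1 ∈ rowStabilizer p q := by simp [rowStabilizer]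

lemma one_mem_columnStabilizer : 1 ∈ columnStabilizer p q := by simp [columnStabilizer]

variable {p q}

lemma eq_one_of_lab_apply_apply {σ τ : Perm (Fin ((p + 1) * (q + 1)))}
    (hσ : σ ∈ rowStabilizer p q) (hτ : τ ∈ columnStabilizer p q)
    (h : ∀ i, lab p q (τ (σ i)) = lab p q i) : σ = 1 ∧ τ = 1 := by
  simp only [rowStabilizer, columnStabilizer, mem_filter, mem_univ, true_and] at hσ hτ
  refine Perm.eq_one_of_preserves_add
    (r := fun i : Fin ((p + 1) * (q + 1)) => (((i : ℕ) / (q + 1) : ℕ) : ℤ))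
    (c := fun i => (((i : ℕ) % (q + 1) : ℕ) : ℤ)) ?_ (fun i => by simp only [hσ])
    (fun i => by simp only [hτ]) (fun i => by exact_mod_cast congrArg Fin.val (h i))
  intro i j hij
  simp only [Prod.mk.injEq, Nat.cast_inj] at hij
  exact Fin.ext (by rw [← Nat.div_add_mod i (q + 1), hij.1, hij.2, Nat.div_add_mod])

lemma lab_eq_last_iff (i : Fin ((p + 1) * (q + 1))) :
    lab p q i = Fin.last (p + q) ↔ (i : ℕ) = (p + 1) * q + p := by
  have hrow : (i : ℕ) / (q + 1) < p + 1 := (Nat.div_lt_iff_lt_mul (Nat.succ_pos q)).2 i.isLt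
  have hcol : (i : ℕ) % (q + 1) < q + 1 := Nat.mod_lt _ (Nat.succ_pos q)
  have hlast : q + (q + 1) * p = (p + 1) * q + p := by ring
  rw [Fin.ext_iff]
  change (i : ℕ) / (q + 1) + (i : ℕ) % (q + 1) = p + q ↔ _
  rw [show (i : ℕ) / (q + 1) + (i : ℕ) % (q + 1) = p + q ↔
      (i : ℕ) / (q + 1) = p ∧ (i : ℕ) % (q + 1) = q by omega,
    Nat.div_mod_unique (Nat.succ_pos q), hlast]
  omega

end Tableau

section TensorPowers

variable {C : Type*} [Category C] [MonoidalCategory C]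

lemma tHom_id : ∀ {m : ℕ} (X : Fin m → C), tHom (fun i => 𝟙 (X i)) = 𝟙 (tObj X)
  | 0, _ => rfl
  | m + 1, X => by
    change tHom (fun i => 𝟙 (X i.castSucc)) ⊗ₘ 𝟙 _ = _
    rw [tHom_id, id_tensorHom_id]
    rfl

lemma tHom_comp :
    ∀ {m : ℕ} {X Y W : Fin m → C} (f : ∀ i, X i ⟶ Y i) (g : ∀ i, Y i ⟶ W i),
      tHom f ≫ tHom g = tHom (fun i => f i ≫ g i)
  | 0, _, _, _, _, _ => Category.comp_id _
  | m + 1, _, _, _, f, g => by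
    change (_ ⊗ₘ _) ≫ (_ ⊗ₘ _) = _ ⊗ₘ _
    rw [tensorHom_comp_tensorHom, tHom_comp]

variable [Preadditive C] [MonoidalPreadditive C]

lemma tHom_eq_zero : ∀ {m : ℕ} {X Y : Fin m → C} (f : ∀ i, X i ⟶ Y i) (j : Fin m),
    f j = 0 → tHom f = 0
  | m + 1, _, _, f, j, hj => by
    change tHom (fun i => f i.castSucc) ⊗ₘ f (Fin.last m) = 0
    rcases Fin.eq_castSucc_or_eq_last j with ⟨j, rfl⟩ | rfl
    · rw [tHom_eq_zero _ j hj, MonoidalPreadditive.zero_tensor]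
    · rw [hj, MonoidalPreadditive.tensor_zero]

lemma CategoryTheory.Limits.IsZero.of_tensor_left [BraidedCategory C] {A A' X : C}
    (e : A ⊗ A' ≅ 𝟙_ C) (h : IsZero (A ⊗ X)) : IsZero X :=
  ((tensorLeft A').map_isZero h).of_iso <|
    (λ_ X).symm ≪≫ whiskerRightIso ((β_ A' A).trans e).symm X ≪≫ α_ A' A X

lemma CategoryTheory.Limits.IsZero.of_tObj_tensor [BraidedCategory C] :
    ∀ {m : ℕ} {X : Fin m → C}, (∀ i, ∃ X', Nonempty (X i ⊗ X' ≅ 𝟙_ C)) →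
      ∀ {W : C}, IsZero (tObj X ⊗ W) → IsZero W
  | 0, _, _, _, h => h.of_iso (λ_ _).symm
  | m + 1, X, hX, _, h => by
    obtain ⟨X', ⟨e⟩⟩ := hX (Fin.last m)
    exact .of_tensor_left e (.of_tObj_tensor (fun i => hX i.castSucc) (h.of_iso (α_ _ _ _).symm))

end TensorPowers

section YoungSymmetrizer

variable {C : Type*} [Category C] [Preadditive C] [MonoidalCategory C] [MonoidalPreadditive C]
  [HasFiniteBiproducts C] {p q : ℕ} {Z : Fin (p + q + 1) → C}
  {ρ : Perm (Fin ((p + 1) * (q + 1))) →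
    ((tObj fun _ : Fin ((p + 1) * (q + 1)) => ⨁ Z) ⟶
      (tObj fun _ : Fin ((p + 1) * (q + 1)) => ⨁ Z))}
  {P : ∀ σ : Perm (Fin ((p + 1) * (q + 1))),
    tObj (fun i => Z (lab p q i)) ≅ tObj (fun i => Z (lab p q (σ i)))}

lemma tHom_ι_comp_comp_tHom_π_eq_zero
    (hcompat : ∀ σ, tHom (fun i => biproduct.ι Z (lab p q i)) ≫ ρ σ =
      (P σ).hom ≫ tHom (fun i => biproduct.ι Z (lab p q (σ i))))
    {σ : Perm (Fin ((p + 1) * (q + 1)))} {i : Fin ((p + 1) * (q + 1))}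
    (hi : lab p q (σ i) ≠ lab p q i) :
    tHom (fun i => biproduct.ι Z (lab p q i)) ≫ ρ σ ≫
      tHom (fun i => biproduct.π Z (lab p q i)) = 0 := by
  rw [← Category.assoc, hcompat, Category.assoc, tHom_comp,
    tHom_eq_zero _ i (biproduct.ι_π_ne Z hi), comp_zero]

/-- On the summand `⨂ᵢ Z (lab p q i)` of `(⨁ Z)^{⊗(p+1)(q+1)}` only the term `σ = τ = 1`
of the Young symmetrizer survives, since every other term moves some label. -/
lemma isZero_tObj_lab_of_youngSymmetrizer_eq_zero (hρ1 : ρ 1 = 𝟙 _)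
    (hρmul : ∀ σ τ, ρ (τ * σ) = ρ σ ≫ ρ τ)
    (hcompat : ∀ σ, tHom (fun i => biproduct.ι Z (lab p q i)) ≫ ρ σ =
      (P σ).hom ≫ tHom (fun i => biproduct.ι Z (lab p q (σ i))))
    (hS : (∑ σ ∈ rowStabilizer p q, ρ σ) ≫
      (∑ τ ∈ columnStabilizer p q, (Perm.sign τ : ℤ) • ρ τ) = 0) :
    IsZero (tObj fun i => Z (lab p q i)) := by
  set ι := tHom (fun i => biproduct.ι Z (lab p q i))
  set π := tHom (fun i => biproduct.π Z (lab p q i))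
  have hvanish : ∀ σ ∈ rowStabilizer p q, ∀ τ ∈ columnStabilizer p q,
      ¬(σ = 1 ∧ τ = 1) → ι ≫ ρ σ ≫ ρ τ ≫ π = 0 := by
    intro σ hσ τ hτ hne
    obtain ⟨i, hi⟩ : ∃ i, lab p q (τ (σ i)) ≠ lab p q i := by
      by_contra! h
      exact hne (eq_one_of_lab_apply_apply hσ hτ h)
    rw [← Category.assoc (ρ σ), ← hρmul]
    exact tHom_ι_comp_comp_tHom_π_eq_zero hcompat hi
  rw [IsZero.iff_id_eq_zero]
  calc 𝟙 _ = ι ≫ π := by simp only [ι, π, tHom_comp, biproduct.ι_π_self, tHom_id]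
    _ = ι ≫ ((∑ σ ∈ rowStabilizer p q, ρ σ) ≫
          (∑ τ ∈ columnStabilizer p q, (Perm.sign τ : ℤ) • ρ τ)) ≫ π := by
      simp only [Preadditive.sum_comp, Preadditive.comp_sum, Preadditive.zsmul_comp,
        Preadditive.comp_zsmul, Category.assoc]
      rw [sum_eq_single_of_mem 1 (one_mem_columnStabilizer p q) fun τ hτ hne => by
          rw [sum_eq_zero fun σ hσ => hvanish σ hσ τ hτ (hne ·.2), smul_zero],
        sum_eq_single_of_mem 1 (one_mem_rowStabilizer p q) fun σ hσ hne =>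
          hvanish σ hσ 1 (one_mem_columnStabilizer p q) (hne ·.1)]
      simp [hρ1]
    _ = 0 := by rw [hS, zero_comp, comp_zero]

end YoungSymmetrizer

/-- `ρ` is the symmetry action of `Σ_{(p+1)(q+1)}` on `X^{⊗(p+1)(q+1)}`, pinned down on the
labelled summand through the permutation isomorphisms `P` (`hcompat`). -/
theorem nonzero_detection_general
    {C : Type*} [Category C] [Preadditive C] [MonoidalCategory C] [SymmetricCategory C]
    [MonoidalPreadditive C] [HasFiniteBiproducts C]
    (p q : ℕ) (L : Fin (p + q) → C) (Y : C)
    (hLinv : ∀ k, ∃ L' : C, Nonempty (L k ⊗ L' ≅ 𝟙_ C))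
    (Z : Fin (p + q + 1) → C) (hZ : Z = Fin.snoc L Y)
    (ρ : Equiv.Perm (Fin ((p + 1) * (q + 1))) →
      ((tObj fun _ : Fin ((p + 1) * (q + 1)) => ⨁ Z) ⟶
        (tObj fun _ : Fin ((p + 1) * (q + 1)) => ⨁ Z)))
    (hρ1 : ρ 1 = 𝟙 _)
    (hρmul : ∀ σ τ, ρ (τ * σ) = ρ σ ≫ ρ τ)
    (P : ∀ σ : Equiv.Perm (Fin ((p + 1) * (q + 1))),
      tObj (fun i => Z (lab p q i)) ≅ tObj (fun i => Z (lab p q (σ i))))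
    (hcompat : ∀ σ,
      tHom (fun i => biproduct.ι Z (lab p q i)) ≫ ρ σ =
        (P σ).hom ≫ tHom (fun i => biproduct.ι Z (lab p q (σ i))))
    (hS : (∑ σ ∈ Finset.univ.filter
            (fun σ : Equiv.Perm (Fin ((p + 1) * (q + 1))) =>
              ∀ i, ((σ i : ℕ) / (q + 1) = (i : ℕ) / (q + 1))), ρ σ) ≫
          (∑ τ ∈ Finset.univ.filter
            (fun τ : Equiv.Perm (Fin ((p + 1) * (q + 1))) =>
              ∀ i, ((τ i : ℕ) % (q + 1) = (i : ℕ) % (q + 1))),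
            (Equiv.Perm.sign τ : ℤ) • ρ τ) = 0) :
    IsZero Y := by
  -- `(p + 1) * (q + 1)` unfolds to `(p + 1) * q + p + 1`, exposing the corner box as the last one.
  have hW : IsZero (tObj fun i : Fin ((p + 1) * q + p + 1) => Z (lab p q i)) :=
    isZero_tObj_lab_of_youngSymmetrizer_eq_zero hρ1 hρmul hcompat hS
  have hinv (i : Fin ((p + 1) * q + p)) :
      ∃ L', Nonempty (Z (lab p q i.castSucc) ⊗ L' ≅ 𝟙_ C) := by
    obtain ⟨k, hk⟩ := Fin.exists_castSucc_eq.2 fun h =>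
      i.castSucc_lt_last.ne (Fin.ext ((lab_eq_last_iff _).1 h))
    rw [hZ, ← hk, Fin.snoc_castSucc]
    exact hLinv k
  have hlast : lab p q (Fin.last ((p + 1) * q + p)) = Fin.last (p + q) := (lab_eq_last_iff _).2 rfl
  have hY : IsZero (Z (lab p q (Fin.last ((p + 1) * q + p)))) := IsZero.of_tObj_tensor hinv hW
  rwa [hlast, hZ, Fin.snoc_last] at hY

/-- Proposition `non-zero_detection` (Coulembier): let `C` be a ℤ/2-graded symmetric
monoidal additive category (the grading is recorded through the braiding being `±𝟙` on
the invertible objects `L k`), let `Y` have a (left) dual, let `L 0, …, L (p-1)` be even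
invertible objects and `L p, …, L (p+q-1)` odd invertible objects, and set
`X = L 0 ⊕ ⋯ ⊕ L (p+q-1) ⊕ Y`.  Let `ρ` be the symmetry action of `Σ_{(p+1)(q+1)}` on
`X^{⊗(p+1)(q+1)}` (characterized through the permutation isomorphisms `P` on the tensor
product of the labelled tableau, hypothesis `hcompat`).  If the Young symmetrizer
`S_X^{(q+1,p+1)}` — symmetrize along rows, then antisymmetrize along columns of the
rectangular `(p+1) × (q+1)` tableau — vanishes, then `Y ≅ 0`. -/
theorem nonzero_detection
    {C : Type*} [Category C] [Preadditive C] [MonoidalCategory C] [SymmetricCategory C]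
    [MonoidalPreadditive C] [HasFiniteBiproducts C]
    (p q : ℕ) (L : Fin (p + q) → C) (Y : C) [HasLeftDual Y]
    (hLinv : ∀ k, ∃ L' : C, Nonempty (L k ⊗ L' ≅ 𝟙_ C))
    (heven : ∀ k : Fin (p + q), (k : ℕ) < p → (β_ (L k) (L k)).hom = 𝟙 _)
    (hodd : ∀ k : Fin (p + q), p ≤ (k : ℕ) → (β_ (L k) (L k)).hom = -𝟙 _)
    (Z : Fin (p + q + 1) → C) (hZ : Z = Fin.snoc L Y)
    (ρ : Equiv.Perm (Fin ((p + 1) * (q + 1))) →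
      ((tObj fun _ : Fin ((p + 1) * (q + 1)) => ⨁ Z) ⟶
        (tObj fun _ : Fin ((p + 1) * (q + 1)) => ⨁ Z)))
    (hρ1 : ρ 1 = 𝟙 _)
    (hρmul : ∀ σ τ, ρ (τ * σ) = ρ σ ≫ ρ τ)
    (P : ∀ σ : Equiv.Perm (Fin ((p + 1) * (q + 1))),
      tObj (fun i => Z (lab p q i)) ≅ tObj (fun i => Z (lab p q (σ i))))
    (hcompat : ∀ σ,
      tHom (fun i => biproduct.ι Z (lab p q i)) ≫ ρ σ =
        (P σ).hom ≫ tHom (fun i => biproduct.ι Z (lab p q (σ i))))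
    (hS : (∑ σ ∈ Finset.univ.filter
            (fun σ : Equiv.Perm (Fin ((p + 1) * (q + 1))) =>
              ∀ i, ((σ i : ℕ) / (q + 1) = (i : ℕ) / (q + 1))), ρ σ) ≫
          (∑ τ ∈ Finset.univ.filter
            (fun τ : Equiv.Perm (Fin ((p + 1) * (q + 1))) =>
              ∀ i, ((τ i : ℕ) % (q + 1) = (i : ℕ) % (q + 1))),
            (Equiv.Perm.sign τ : ℤ) • ρ τ) = 0) :
    IsZero Y :=
  nonzero_detection_general p q L Y hLinv Z hZ ρ hρ1 hρmul P hcompat hS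
end

section
/- Let 𝒞 be a locally finitely presentable category and 𝒜 a full subcategory of the finitely presentable objects of 𝒞. Then the canonical functor Ind(𝒜) → 𝒞 induced by the inclusion is fully faithful, its essential image is closed under filtered colimits, and an object C of 𝒞 lies in the closure of 𝒜 under filtered colimits if and only if C is the colimit of some filtered diagram with values in 𝒜. In particular, the closure of 𝒜 under filtered colimits terminates after one step. -/
/-!
Representable ind-objects are finitely presentable, and `L` sends them to the finitely
presentable objects of `𝒜`. So for a representable source `y a`, both `Hom(y a, -)` and
`Hom(L (y a), L -)` commute with filtered colimits, and writing the target as a filtered colimit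
of representables reduces bijectivity of `L` on `Hom(y a, Y)` to full faithfulness on `𝒜`.
Writing a general source as a filtered colimit of representables turns both `Hom(-, Y)` and
`Hom(L -, L Y)` into limits, so `L` is fully faithful. A fully faithful functor preserving
filtered colimits has an essential image closed under filtered colimits; it contains `𝒜`, hence
the filtered closure. Conversely `L X` is the image under `L` of the canonical presentation of
`X` as a filtered colimit of representables, i.e. a filtered colimit of objects of `𝒜`.
-/

open CategoryTheory CategoryTheory.Limits

universe v u

/-- The closure of a class of objects under (small) filtered colimits. -/
inductive FilteredClosure {C : Type u} [Category.{v} C] (P : C → Prop) : C → Prop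
  | base : ∀ (X : C), P X → FilteredClosure P X
  | colim : ∀ {J : Type v} [SmallCategory J] [IsFiltered J] (F : J ⥤ C) (c : Cocone F),
      IsColimit c → (∀ j : J, FilteredClosure P (F.obj j)) → FilteredClosure P c.pt

/-- An object is finitely presentable if its covariant hom-functor preserves filtered
colimits. -/
def IsFinitelyPresentable {C : Type u} [Category.{v} C] (X : C) : Prop :=
  Nonempty (PreservesFilteredColimitsOfSize.{v, v} (coyoneda.obj (Opposite.op X)))

lemma IsFinitelyPresentable.of_iso {C : Type u} [Category.{v} C] {X Y : C}
    (h : _root_.IsFinitelyPresentable X) (e : X ≅ Y) : _root_.IsFinitelyPresentable Y :=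
  let ⟨_⟩ := h
  ⟨⟨fun _ _ _ ↦ preservesColimitsOfShape_of_natIso (coyoneda.mapIso e.symm.op)⟩⟩

section FilteredColimits

variable {C : Type u} [Category.{v} C]

def IsFilteredColimitIn (P : C → Prop) (X : C) : Prop :=
  ∃ (J : Type v) (_ : SmallCategory J) (_ : IsFiltered J) (F : J ⥤ C)
    (c : Cocone F), Nonempty (IsColimit c) ∧ Nonempty (c.pt ≅ X) ∧ ∀ j : J, P (F.obj j)

theorem FilteredClosure.of_isFilteredColimitIn {P : C → Prop} {X : C}
    (h : IsFilteredColimitIn P X) : FilteredClosure P X :=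
  let ⟨_, _, _, F, c, ⟨hc⟩, ⟨e⟩, hF⟩ := h
  .colim F (c.extend e.hom) (hc.extendIso e.hom) fun j ↦ .base _ (hF j)

theorem filteredClosure_le {P Q : ObjectProperty C}
    (hQ : ∀ (J : Type v) [SmallCategory J] [IsFiltered J], Q.IsClosedUnderColimitsOfShape J)
    (hPQ : P ≤ Q) : FilteredClosure P ≤ Q := by
  intro X hX
  induction hX with
  | base X hX => exact hPQ X hX
  | @colim J _ _ F c hc _ ih =>
    have := hQ J
    exact Q.prop_of_isColimit hc ih

end FilteredColimits

namespace CategoryTheory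

open Opposite CategoryTheory.Functor

section

variable {C D : Type*} [Category C] [Category D]

def Functor.coyonedaMap (F : C ⥤ D) (X : C) :
    coyoneda.obj (op X) ⟶ F ⋙ coyoneda.obj (op (F.obj X)) where
  app _ := TypeCat.ofHom fun f ↦ F.map f
  naturality _ _ g := by ext f; exact F.map_comp f g

lemma isIso_app_conePt_of_preservesLimit {J : Type*} [Category J] (K : J ⥤ C) {L L' : C ⥤ D}
    (α : L ⟶ L') [IsIso (whiskerLeft K α)] (c : Cone K) (hc : IsLimit c)
    [PreservesLimit K L] [PreservesLimit K L'] :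
    IsIso (α.app c.pt) := by
  let e := IsLimit.conePointsIsoOfNatIso
    (isLimitOfPreserves L hc) (isLimitOfPreserves L' hc) (asIso (whiskerLeft K α))
  have : α.app c.pt = e.hom :=
    (isLimitOfPreserves L' hc).hom_ext fun j ↦ by
      simpa [e] using ((isLimitOfPreserves L' hc).map_π (L.mapCone c) (whiskerLeft K α) j).symm
  rw [this]
  infer_instance

lemma Functor.map_bijective_of_fullyFaithful_comp {B : Type*} [Category B] {F : B ⥤ C}
    [F.Full] [F.Faithful] {L : C ⥤ D} (h : (F ⋙ L).FullyFaithful) (X Y : B) :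
    Function.Bijective (L.map : (F.obj X ⟶ F.obj Y) → _) :=
  (Function.Bijective.of_comp_iff _ ((FullyFaithful.ofFullyFaithful F).map_bijective X Y)).1
    (h.map_bijective X Y)

end

namespace Ind

variable {A : Type u} [Category.{v} A]

noncomputable def presentationCocone (X : Ind A) : Cocone (X.presentation.F ⋙ Ind.yoneda) :=
  (colimit.cocone _).extend (Ind.colimitPresentationCompYoneda X).hom

noncomputable def isColimitPresentationCocone (X : Ind A) :
    IsColimit (presentationCocone X) :=
  (colimit.isColimit _).extendIso _

noncomputable def coyonedaObjYonedaObjIso (a : A) :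
    coyoneda.obj (op (Ind.yoneda.obj a)) ≅
      Ind.inclusion A ⋙ (evaluation Aᵒᵖ (Type v)).obj (op a) :=
  NatIso.ofComponents
    (fun Y ↦ Equiv.toIso <| (Ind.inclusion.fullyFaithful.homEquiv.trans
      (Iso.homCongr (Ind.yonedaCompInclusion.app a) (Iso.refl _))).trans yonedaEquiv)
    (fun f ↦ by ext g; simp [FullyFaithful.homEquiv, yonedaEquiv_comp])

lemma isFinitelyPresentable_yoneda_obj (a : A) :
    _root_.IsFinitelyPresentable (Ind.yoneda.obj a) :=
  ⟨⟨fun _ _ _ ↦ preservesColimitsOfShape_of_natIso (coyonedaObjYonedaObjIso a).symm⟩⟩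

variable {D : Type*} [Category.{v} D] (L : Ind A ⥤ D) [PreservesFilteredColimitsOfSize.{v, v} L]

theorem map_bijective_from_yoneda_obj
    (hfp : ∀ a, _root_.IsFinitelyPresentable (L.obj (Ind.yoneda.obj a)))
    (hff : (Ind.yoneda ⋙ L).FullyFaithful) (a : A) (Y : Ind A) :
    Function.Bijective (L.map : (Ind.yoneda.obj a ⟶ Y) → _) := by
  obtain ⟨_⟩ := isFinitelyPresentable_yoneda_obj a
  obtain ⟨_⟩ := hfp a
  have :
      IsIso (whiskerLeft (Y.presentation.F ⋙ Ind.yoneda) (L.coyonedaMap (Ind.yoneda.obj a))) :=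
    NatTrans.isIso_iff_isIso_app _ |>.2 fun j ↦ (isIso_iff_bijective _).2
      (Functor.map_bijective_of_fullyFaithful_comp hff a (Y.presentation.F.obj j))
  exact (isIso_iff_bijective ((L.coyonedaMap _).app Y)).1
    (isIso_app_coconePt_of_preservesColimit _ _ _ (isColimitPresentationCocone Y))

theorem map_bijective
    (hfp : ∀ a, _root_.IsFinitelyPresentable (L.obj (Ind.yoneda.obj a)))
    (hff : (Ind.yoneda ⋙ L).FullyFaithful) (X Y : Ind A) :
    Function.Bijective (L.map : (X ⟶ Y) → _) := by
  have : IsIso (whiskerLeft (X.presentation.F ⋙ Ind.yoneda).op (yonedaMap L Y)) :=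
    NatTrans.isIso_iff_isIso_app _ |>.2 fun j ↦ (isIso_iff_bijective _).2
      (map_bijective_from_yoneda_obj L hfp hff (X.presentation.F.obj j.unop) Y)
  have : PreservesLimit (X.presentation.F ⋙ Ind.yoneda).op L.op := preservesLimit_op _ _
  exact (isIso_iff_bijective ((yonedaMap L Y).app (op X))).1
    (isIso_app_conePt_of_preservesLimit _ _ _ (isColimitPresentationCocone X).op)

theorem nonempty_fullyFaithful
    (hfp : ∀ a, _root_.IsFinitelyPresentable (L.obj (Ind.yoneda.obj a)))
    (hff : (Ind.yoneda ⋙ L).FullyFaithful) : Nonempty L.FullyFaithful :=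
  (FullyFaithful.nonempty_iff_map_bijective L).2 (map_bijective L hfp hff)

theorem exists_isColimit_iso_obj {K : A ⥤ D} (e : Ind.yoneda ⋙ L ≅ K) (X : Ind A) :
    ∃ (J : Type v) (_ : SmallCategory J) (_ : IsFiltered J) (F : J ⥤ A) (c : Cocone (F ⋙ K)),
      Nonempty (IsColimit c) ∧ Nonempty (c.pt ≅ L.obj X) := by
  let α : X.presentation.F ⋙ K ≅ (X.presentation.F ⋙ Ind.yoneda) ⋙ L :=
    isoWhiskerLeft _ e.symm ≪≫ (Functor.associator _ _ _).symm
  exact ⟨X.presentation.I, inferInstance, inferInstance, X.presentation.F,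
    (Cocone.precompose α.hom).obj (L.mapCocone (presentationCocone X)),
    ⟨(IsColimit.precomposeHomEquiv α _).symm
      (isColimitOfPreserves L (isColimitPresentationCocone X))⟩, ⟨Iso.refl _⟩⟩

end Ind

end CategoryTheory

theorem ind_objects_general {C : Type u} [Category.{v} C]
    (P : C → Prop) (hP : ∀ X : C, P X → _root_.IsFinitelyPresentable X)
    (L : Ind (ObjectProperty.FullSubcategory P) ⥤ C) [PreservesFilteredColimitsOfSize.{v, v} L]
    (hL : Ind.yoneda ⋙ L ≅ ObjectProperty.ι P) :
    L.Full ∧ L.Faithful ∧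
    (∀ X : C, L.essImage X ↔ FilteredClosure P X) ∧
    (∀ X : C, FilteredClosure P X ↔
      ∃ (J : Type v) (_ : SmallCategory J) (_ : IsFiltered J) (F : J ⥤ C)
        (c : Cocone F), Nonempty (IsColimit c) ∧ Nonempty (c.pt ≅ X) ∧
          ∀ j : J, P (F.obj j)) := by
  obtain ⟨hLff⟩ := Ind.nonempty_fullyFaithful L
    (fun a ↦ (hP a.obj a.property).of_iso (hL.app a).symm)
    ((ObjectProperty.fullyFaithfulι P).ofIso hL.symm)
  have := hLff.full
  have := hLff.faithful
  have closure_le_essImage : FilteredClosure P ≤ L.essImage :=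
    filteredClosure_le (fun _ _ _ ↦ inferInstance) fun X hX ↦
      ⟨Ind.yoneda.obj ⟨X, hX⟩, ⟨hL.app _⟩⟩
  have essImage_le : L.essImage ≤ IsFilteredColimitIn P := by
    rintro X ⟨Z, ⟨eZ⟩⟩
    obtain ⟨J, _, _, F, c, hc, ⟨e⟩⟩ := Ind.exists_isColimit_iso_obj L hL Z
    exact ⟨J, inferInstance, inferInstance, F ⋙ ObjectProperty.ι P, c, hc, ⟨e ≪≫ eZ⟩,
      fun j ↦ (F.obj j).property⟩
  exact ⟨hLff.full, hLff.faithful,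
    fun X ↦ ⟨fun h ↦ .of_isFilteredColimitIn (essImage_le X h), closure_le_essImage X⟩,
    fun X ↦ ⟨fun h ↦ essImage_le X (closure_le_essImage X h), .of_isFilteredColimitIn⟩⟩

/-- Proposition `ind_objects`: let `𝒞` be a locally finitely presentable category (here:
cocomplete with a strong generator `G` of finitely presentable objects) and `𝒜` a full
subcategory of finitely presentable objects (given by the predicate `P`).  Then the
canonical functor `Ind(𝒜) → 𝒞` (any filtered-colimit preserving functor `L` restricting
to the inclusion along `Ind.yoneda`) is fully faithful, its essential image is the
closure of `𝒜` under filtered colimits, and an object lies in this closure if and only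
if it is the colimit of a filtered diagram with values in `𝒜`; in particular the closure
under filtered colimits terminates after one step. -/
theorem ind_objects {C : Type u} [Category.{v} C] [HasColimitsOfSize.{v, v} C]
    (G : Set C) (hGfp : ∀ X ∈ G, _root_.IsFinitelyPresentable X) (hGgen : ObjectProperty.IsDetecting (fun X => X ∈ G))
    (P : C → Prop) (hP : ∀ X : C, P X → _root_.IsFinitelyPresentable X)
    (L : Ind (ObjectProperty.FullSubcategory P) ⥤ C) [PreservesFilteredColimitsOfSize.{v, v} L]
    (hL : Ind.yoneda ⋙ L ≅ ObjectProperty.ι P) :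
    L.Full ∧ L.Faithful ∧
    (∀ X : C, L.essImage X ↔ FilteredClosure P X) ∧
    (∀ X : C, FilteredClosure P X ↔
      ∃ (J : Type v) (_ : SmallCategory J) (_ : IsFiltered J) (F : J ⥤ C)
        (c : Cocone F), Nonempty (IsColimit c) ∧ Nonempty (c.pt ≅ X) ∧
          ∀ j : J, P (F.obj j)) :=
  ind_objects_general P hP L hL
end

section
/- Let R = ℚ[x,y]/(xy) and A = R/y ≅ ℚ[x]. The R-module A admits the free resolution ⋯ → R →^x R →^y R →^x R →^y R → A → 0, and consequently Tor_n^R(A, A) ≅ A/xA ≅ ℚ for all odd n ≥ 1; in particular Tor_1^R(A,A) ≠ 0 and is not a flat A-module. -/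
/-!
Since `ℚ[x,y]` is a domain, `xy ∣ yp` forces `x ∣ p` (and symmetrically), which is the exactness of
the periodic resolution. The ideal `(y)` of `ℚ[x,y]` is prime and contains `xy`, so `A = R/(y)` is a
domain in which `x ≠ 0`; multiplication by `x` is then injective on `A` but kills the nonzero module
`A/xA`, which therefore cannot be flat. The quotient `A/xA = ℚ[x,y]/(x,y)` is `ℚ` via the constant
coefficient.
-/

noncomputable section

open MvPolynomial

/-- The ring `R = ℚ[x,y]/(xy)`. -/
abbrev RXY : Type :=
  MvPolynomial (Fin 2) ℚ ⧸ Ideal.span {(X 0 : MvPolynomial (Fin 2) ℚ) * X 1}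

/-- The image of `x` in `R`. -/
abbrev xR : RXY := Ideal.Quotient.mk _ (X 0)

/-- The image of `y` in `R`. -/
abbrev yR : RXY := Ideal.Quotient.mk _ (X 1)

/-- The `R`-algebra `A = R/y ≅ ℚ[x]`. -/
abbrev AR : Type := RXY ⧸ Ideal.span {yR}

instance instCommRingAR : CommRing AR := Ideal.Quotient.commRing _

/-- The image of `x` in `A`. -/
abbrev xA : AR := Ideal.Quotient.mk _ xR

/-- `A/xA`, which computes `Tor_n^R(A,A)` for odd `n ≥ 1`. -/
abbrev TorOdd : Type := AR ⧸ Ideal.span {xA}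

theorem exact_mul_quotient_span_mul {S : Type*} [CommRing S] [IsDomain S] {a b : S} (ha : a ≠ 0) :
    Function.Exact (fun r : S ⧸ Ideal.span {a * b} => Ideal.Quotient.mk _ b * r)
      (fun r : S ⧸ Ideal.span {a * b} => Ideal.Quotient.mk _ a * r) := by
  intro r
  obtain ⟨p, rfl⟩ := Ideal.Quotient.mk_surjective r
  constructor
  · intro h
    dsimp only at h
    rw [← map_mul, Ideal.Quotient.eq_zero_iff_mem, Ideal.mem_span_singleton,
      mul_dvd_mul_iff_left ha] at h
    obtain ⟨q, rfl⟩ := h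
    exact ⟨Ideal.Quotient.mk _ q, (map_mul _ _ _).symm⟩
  · rintro ⟨s, hs⟩
    simp only [← hs, ← mul_assoc, ← map_mul, Ideal.Quotient.mk_singleton_self, zero_mul]

theorem not_flat_quotient_span_singleton {S : Type*} [CommRing S] {a : S} (ha : IsRegular a)
    [Nontrivial (S ⧸ Ideal.span {a})] : ¬ Module.Flat S (S ⧸ Ideal.span {a}) := by
  intro hflat
  have hreg : IsSMulRegular (S ⧸ Ideal.span {a}) a := Module.Flat.isSMulRegular_of_isRegular ha
  refine one_ne_zero (hreg ?_)
  simp [Algebra.smul_def]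

lemma RingHom.eq_zero_of_mem_span_singleton {S T : Type*} [CommRing S] [Semiring T] (f : S →+* T)
    {a : S} (ha : f a = 0) : ∀ s ∈ Ideal.span {a}, f s = 0 := fun _ hs =>
  RingHom.mem_ker.1 ((Ideal.span_singleton_le_iff_mem _).2 (RingHom.mem_ker.2 ha) hs)

lemma span_X_mul_X_le_span_X_one :
    Ideal.span {X 0 * X 1} ≤ Ideal.span {(X 1 : MvPolynomial (Fin 2) ℚ)} :=
  Ideal.span_singleton_le_span_singleton.2 (dvd_mul_left _ _)

lemma span_yR_eq_map : Ideal.span {yR} = (Ideal.span {X 1}).map (Ideal.Quotient.mk _) := by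
  rw [Ideal.map_span, Set.image_singleton]

instance : (Ideal.span {yR}).IsPrime := by
  have : (Ideal.span {(X 1 : MvPolynomial (Fin 2) ℚ)}).IsPrime :=
    (Ideal.span_singleton_prime (X_ne_zero 1)).2 X_prime
  rw [span_yR_eq_map]
  exact Ideal.map_isPrime_of_surjective Ideal.Quotient.mk_surjective
    (by rw [Ideal.mk_ker]; exact span_X_mul_X_le_span_X_one)

lemma xA_ne_zero : xA ≠ 0 := by
  rw [Ne, Ideal.Quotient.eq_zero_iff_mem, span_yR_eq_map,
    Ideal.mem_quotient_iff_mem span_X_mul_X_le_span_X_one, Ideal.mem_span_singleton, X_dvd_X]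
  decide

def toTorOdd : MvPolynomial (Fin 2) ℚ →+* TorOdd :=
  (Ideal.Quotient.mk _).comp ((Ideal.Quotient.mk _).comp (Ideal.Quotient.mk _))

lemma toTorOdd_surjective : Function.Surjective toTorOdd :=
  Ideal.Quotient.mk_surjective.comp <|
    Ideal.Quotient.mk_surjective.comp Ideal.Quotient.mk_surjective

lemma toTorOdd_X (i : Fin 2) : toTorOdd (X i) = 0 := by
  fin_cases i
  · exact Ideal.Quotient.mk_singleton_self _
  · exact congrArg (Ideal.Quotient.mk _) (Ideal.Quotient.mk_singleton_self _)

lemma toTorOdd_eq_C_constantCoeff (p : MvPolynomial (Fin 2) ℚ) :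
    toTorOdd p = toTorOdd (C (constantCoeff p)) := by
  suffices toTorOdd = (toTorOdd.comp C).comp constantCoeff from congrArg (· p) this
  exact ringHom_ext (fun q => by simp) (fun i => by simp [toTorOdd_X])

def torOddConstantCoeff : TorOdd →+* ℚ :=
  Ideal.Quotient.lift _ (Ideal.Quotient.lift _ (Ideal.Quotient.lift _ constantCoeff
    (RingHom.eq_zero_of_mem_span_singleton _ (by simp)))
    (RingHom.eq_zero_of_mem_span_singleton _ (by simp)))
    (RingHom.eq_zero_of_mem_span_singleton _ (by simp))

lemma torOddConstantCoeff_toTorOdd (p : MvPolynomial (Fin 2) ℚ) :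
    torOddConstantCoeff (toTorOdd p) = constantCoeff p :=
  rfl

instance : Nontrivial TorOdd := torOddConstantCoeff.domain_nontrivial

def torOddEquivRat : TorOdd ≃+* ℚ :=
  RingEquiv.ofRingHom torOddConstantCoeff (toTorOdd.comp C) (Subsingleton.elim _ _) <|
    RingHom.ext fun t => by
      obtain ⟨p, rfl⟩ := toTorOdd_surjective t
      rw [RingHom.comp_apply, RingHom.comp_apply, torOddConstantCoeff_toTorOdd,
        ← toTorOdd_eq_C_constantCoeff, RingHom.id_apply]

/-- For `R = ℚ[x,y]/(xy)` and `A = R/y ≅ ℚ[x]`: the sequence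
`⋯ → R →^x R →^y R →^x R →^y R → A → 0` is a free resolution of `A`
(the exactness statements below together with `ker(R → A) = (y)`, which holds by
definition), and consequently `Tor_n^R(A,A) ≅ A/xA ≅ ℚ` for odd `n ≥ 1`
(the homology of `⋯ →^0 A →^x A →^0 A → 0` in odd degrees); in particular
`Tor_1^R(A,A) = A/xA ≠ 0` and it is not flat as an `A`-module. -/
theorem derived_example :
    Function.Exact (fun r : RXY => xR * r) (fun r : RXY => yR * r) ∧
    Function.Exact (fun r : RXY => yR * r) (fun r : RXY => xR * r) ∧
    Nonempty (TorOdd ≃+* ℚ) ∧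
    Nontrivial TorOdd ∧
    ¬ Module.Flat AR TorOdd := by
  refine ⟨?_, exact_mul_quotient_span_mul (X_ne_zero 0), ⟨torOddEquivRat⟩, inferInstance,
    not_flat_quotient_span_singleton (IsRegular.of_ne_zero xA_ne_zero)⟩
  have := exact_mul_quotient_span_mul (S := MvPolynomial (Fin 2) ℚ) (X_ne_zero 1) (b := X 0)
  rwa [mul_comm] at this

end
end

section
/- Let R = ℚ[x,y]/(xy) and A = R/y. Suppose R' is a flat R-algebra such that R'' := R'/yR' is a projective R'-module and x is a unit in R''. Then there exist z, z' ∈ R' with xz = 1 + yz', and the map (x y) : R' ⊕ R' → R' is a split surjection of R'-modules; however, the induced map A ⊕ A → A given by (x 0) is not surjective. -/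
noncomputable section

open MvPolynomial

/-! A unit of `R'/yR'` lifts to a Bézout relation `xz - yz' = 1` in `R'`, and `r ↦ (zr, -z'r)`
splits `(x y)`. Over `A = ℚ[x]`, however, evaluation at the origin kills `x` but not `1`,
so `1` is not in the image of `(x 0)`. -/

section Bezout

variable {S : Type*} [CommRing S]

theorem exists_mul_eq_one_add_mul_of_isUnit_mk {a b : S}
    (ha : IsUnit (Ideal.Quotient.mk (Ideal.span {b}) a)) :
    ∃ z z' : S, a * z = 1 + b * z' := by
  obtain ⟨v, hv⟩ := ha.exists_right_inv
  obtain ⟨z, rfl⟩ := Ideal.Quotient.mk_surjective v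
  rw [← map_mul, ← map_one (Ideal.Quotient.mk _), Ideal.Quotient.eq,
    Ideal.mem_span_singleton'] at hv
  obtain ⟨z', hz'⟩ := hv
  exact ⟨z, z', by linear_combination -hz'⟩

theorem exists_linearMap_mul_fst_add_mul_snd_eq {a b z z' : S} (h : a * z = 1 + b * z') :
    ∃ s : S →ₗ[S] S × S, ∀ r : S, a * (s r).1 + b * (s r).2 = r :=
  ⟨LinearMap.toSpanSingleton S _ (z, -z'), fun r => by
    simp only [LinearMap.toSpanSingleton_apply, Prod.smul_fst, Prod.smul_snd, smul_eq_mul]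
    linear_combination r * h⟩

end Bezout

theorem RingHom.map_eq_zero_of_mem_span_singleton {S T : Type*} [Semiring S] [Semiring T]
    (f : S →+* T) {a : S} (ha : f a = 0) : ∀ s ∈ Ideal.span {a}, f s = 0 := fun _ hs =>
  RingHom.mem_ker.1 ((Ideal.span_singleton_le_iff_mem _).2 (RingHom.mem_ker.2 ha) hs)

def RXY.evalZero : RXY →+* ℚ :=
  Ideal.Quotient.lift _ (eval 0) ((eval 0).map_eq_zero_of_mem_span_singleton (by simp))

def AR.evalZero : AR →+* ℚ :=
  Ideal.Quotient.lift _ RXY.evalZero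
    (RXY.evalZero.map_eq_zero_of_mem_span_singleton (by simp [RXY.evalZero]))

theorem AR.evalZero_xA : AR.evalZero xA = 0 := by
  simp [AR.evalZero, RXY.evalZero]

theorem not_surjective_mul_fst_add_zero_mul_snd {S T : Type*} [Semiring S] [Semiring T]
    [Nontrivial T] (f : S →+* T) {a : S} (ha : f a = 0) :
    ¬ Function.Surjective (fun w : S × S => a * w.1 + 0 * w.2) := fun h => by
  obtain ⟨w, hw⟩ := h 1
  simpa [ha] using congrArg f hw

theorem no_flat_algebra_core_general (R' : Type) [CommRing R'] [Algebra RXY R']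
    (hx : IsUnit (Ideal.Quotient.mk (Ideal.span {algebraMap RXY R' yR})
      (algebraMap RXY R' xR))) :
    (∃ z z' : R', algebraMap RXY R' xR * z = 1 + algebraMap RXY R' yR * z') ∧
    (∃ s : R' →ₗ[R'] R' × R',
      ∀ r : R', algebraMap RXY R' xR * (s r).1 + algebraMap RXY R' yR * (s r).2 = r) ∧
    ¬ Function.Surjective (fun w : AR × AR => xA * w.1 + 0 * w.2) := by
  obtain ⟨z, z', hz⟩ := exists_mul_eq_one_add_mul_of_isUnit_mk hx
  exact ⟨⟨z, z', hz⟩, exists_linearMap_mul_fst_add_mul_snd_eq hz,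
    not_surjective_mul_fst_add_zero_mul_snd AR.evalZero AR.evalZero_xA⟩

/-- Core of the proof that no flat `R`-algebra gives a flat replacement of `A = R/y`
(`R = ℚ[x,y]/(xy)`): if `R'` is a flat `R`-algebra such that `R'' = R'/yR'` is projective
over `R'` and `x` is a unit in `R''`, then there are `z, z' ∈ R'` with `xz = 1 + yz'`,
the map `(x y) : R' ⊕ R' → R'` is a split surjection of `R'`-modules, yet the induced
map `(x 0) : A ⊕ A → A` is not surjective. -/
theorem no_flat_algebra_core (R' : Type) [CommRing R'] [Algebra RXY R']
    [Module.Flat RXY R']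
    (hproj : Module.Projective R' (R' ⧸ Ideal.span {algebraMap RXY R' yR}))
    (hx : IsUnit (Ideal.Quotient.mk (Ideal.span {algebraMap RXY R' yR})
      (algebraMap RXY R' xR))) :
    (∃ z z' : R', algebraMap RXY R' xR * z = 1 + algebraMap RXY R' yR * z') ∧
    (∃ s : R' →ₗ[R'] R' × R',
      ∀ r : R', algebraMap RXY R' xR * (s r).1 + algebraMap RXY R' yR * (s r).2 = r) ∧
    ¬ Function.Surjective (fun w : AR × AR => xA * w.1 + 0 * w.2) :=
  no_flat_algebra_core_general R' hx

end
end

section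
/- Let R = ℚ[x,y]/(xy) and let R'' be a nonzero flat R-algebra on which y acts as zero (i.e. an R/y-algebra flat over R). Then x acts invertibly on R''. -/
/-!
In `R = ℚ[x,y]/(xy)` the annihilator of `y` is `xR`, i.e. `R --x--> R --y--> R` is exact.
Tensoring with a flat `R''` keeps it exact, so in `R''`, where `y` acts as zero, the element `1`
is killed by `y` and hence is a multiple of `x`.
-/

noncomputable section

open MvPolynomial

theorem Module.Flat.exact_smul_smul {R M : Type*} [CommRing R] [AddCommGroup M] [Module R M]
    [Module.Flat R M] {a b : R} (h : Function.Exact (a * · : R → R) (b * · : R → R)) :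
    Function.Exact (a • · : M → M) (b • · : M → M) := by
  have lid_comm (c : R) : LinearMap.lsmul R M c ∘ₗ (TensorProduct.lid R M).toLinearMap =
      (TensorProduct.lid R M).toLinearMap ∘ₗ (LinearMap.lsmul R R c).rTensor M := by
    ext; simp
  exact Function.Exact.of_ladder_linearEquiv_of_exact (lid_comm a) (lid_comm b)
    (Module.Flat.rTensor_exact M h)

theorem Module.Flat.isUnit_algebraMap_of_exact_mul {R S : Type*} [CommRing R] [CommRing S]
    [Algebra R S] [Module.Flat R S] {a b : R}
    (h : Function.Exact (a * · : R → R) (b * · : R → R)) (hb : algebraMap R S b = 0) :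
    IsUnit (algebraMap R S a) := by
  obtain ⟨s, hs⟩ := (exact_smul_smul (M := S) h 1).mp (by simp [Algebra.smul_def, hb])
  exact .of_mul_eq_one s (by simpa [Algebra.smul_def] using hs)

theorem Ideal.Quotient.exact_mul_mk_span_mul {A : Type*} [CommRing A] [IsDomain A] {a b : A}
    (hb : b ≠ 0) :
    Function.Exact (Ideal.Quotient.mk (Ideal.span {a * b}) a * ·)
      (Ideal.Quotient.mk (Ideal.span {a * b}) b * ·) := by
  intro p
  constructor
  · intro hp
    obtain ⟨p, rfl⟩ := Ideal.Quotient.mk_surjective p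
    obtain ⟨q, hq⟩ := Ideal.mem_span_singleton.mp (Ideal.Quotient.eq_zero_iff_mem.mp
      ((map_mul _ b p).trans hp))
    have hpq : p = a * q := mul_left_cancel₀ hb (hq.trans (by ring))
    exact ⟨Ideal.Quotient.mk _ q, by rw [hpq, map_mul]⟩
  · rintro ⟨q, rfl⟩
    dsimp only
    rw [← mul_assoc, mul_comm _ (Ideal.Quotient.mk _ a), ← map_mul,
      Ideal.Quotient.eq_zero_iff_mem.mpr (Ideal.mem_span_singleton_self _), zero_mul]

theorem x_invertible_on_flat_general (R'' : Type) [CommRing R''] [Algebra RXY R'']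
    [Module.Flat RXY R'']
    (hy : algebraMap RXY R'' yR = 0) :
    IsUnit (algebraMap RXY R'' xR) :=
  Module.Flat.isUnit_algebraMap_of_exact_mul
    (Ideal.Quotient.exact_mul_mk_span_mul (X_ne_zero 1)) hy

/-- For `R = ℚ[x,y]/(xy)`: on any nonzero flat `R`-algebra `R''` on which `y` acts as
zero, the element `x` acts invertibly. -/
theorem x_invertible_on_flat (R'' : Type) [CommRing R''] [Algebra RXY R'']
    [Module.Flat RXY R''] [Nontrivial R'']
    (hy : algebraMap RXY R'' yR = 0) :
    IsUnit (algebraMap RXY R'' xR) :=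
  x_invertible_on_flat_general R'' hy

end
end
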